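/- A finite-dimensional multiplicative Hom-Lie algebra L over an algebraically closed field is nilpotent if and only if it is strongly nilpotent, i.e. there is a chain of ideals 0 = Iₙ ⊴ ⋯ ⊴ I₁ = L with dim Iᵢ/Iᵢ₊₁ = 1 and [L, Iᵢ] ⊆ Iᵢ₊₁ for 1 < i < n. -/

import Mathlib

/-!
Nilpotent ⇒ strongly nilpotent: refine the lower central series `L = L¹ ⊇ L² ⊇ ⋯ ⊇ Lᵐ = 0`,
whose terms are α-invariant by multiplicativity, into a chain of α-invariant subspaces with
one-dimensional steps. A subspace `V` with `Lᵏ⁺¹ ⊆ V ⊆ Lᵏ` satisfies `[L, V] ⊆ Lᵏ⁺¹`, so every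
member of the chain is an ideal and is bracketed into the next one. An α-invariant hyperplane of
`V` containing `Lᵏ⁺¹ ⊊ V` is the kernel of an eigenvector of the transpose of α acting on the
annihilator of `Lᵏ⁺¹` in `V*`; it exists because `K` is algebraically closed.

Strongly nilpotent ⇒ nilpotent: `[L, Iᵢ] ⊆ Iᵢ₊₁` gives `Lⁱ ⊆ Iᵢ` by induction, so `Lⁿ = 0`.
-/

variable {K L : Type*} [Field K] [AddCommGroup L] [Module K L]

/-- The lower central series of a Hom-Lie algebra: `lcs 0 = L¹ = L` and
`lcs k = Lᵏ⁺¹ = [Lᵏ, L]`. -/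
def lcs (br : L →ₗ[K] L →ₗ[K] L) : ℕ → Submodule K L
  | 0 => ⊤
  | k + 1 => Submodule.span K {z | ∃ x ∈ lcs br k, ∃ y : L, z = br x y}

open Module Module.End

section LowerCentralSeries

variable (br : L →ₗ[K] L →ₗ[K] L)

theorem lcs_succ_le_iff {k : ℕ} {V : Submodule K L} :
    lcs br (k + 1) ≤ V ↔ ∀ x ∈ lcs br k, ∀ y, br x y ∈ V := by
  simp only [lcs, Submodule.span_le]
  constructor
  · exact fun h x hx y => h ⟨x, hx, y, rfl⟩
  · rintro h _ ⟨x, hx, y, rfl⟩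
    exact h x hx y

theorem lcs_antitone : Antitone (lcs br) := by
  refine antitone_nat_of_succ_le fun k => ?_
  induction k with
  | zero => exact le_top
  | succ k ih =>
    exact (lcs_succ_le_iff br).mpr fun x hx y => (lcs_succ_le_iff br).mp le_rfl x (ih hx) y

variable {br}

theorem br_mem_of_lcs_succ_le (hanti : ∀ x y : L, br y x = - br x y) {k : ℕ}
    {U : Submodule K L} (hU : lcs br (k + 1) ≤ U) (x : L) {y : L} (hy : y ∈ lcs br k) :
    br x y ∈ U := by
  rw [hanti]
  exact neg_mem ((lcs_succ_le_iff br).mp hU y hy x)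

theorem lcs_mem_invtSubmodule {α : L →ₗ[K] L} (hmult : ∀ x y : L, α (br x y) = br (α x) (α y))
    (k : ℕ) : lcs br k ∈ invtSubmodule α := by
  induction k with
  | zero => exact invtSubmodule.top_mem α
  | succ k ih =>
    rw [mem_invtSubmodule_iff_map_le]
    simp only [lcs, Submodule.map_span, Submodule.span_le]
    rintro _ ⟨_, ⟨x, hx, y, rfl⟩, rfl⟩
    exact Submodule.subset_span ⟨α x, ih hx, α y, hmult x y⟩

theorem exists_lcs_succ_lt_of_le {m : ℕ} (hm : lcs br m = ⊥) {V : Submodule K L} (hV : V ≠ ⊥)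
    {k : ℕ} (hkV : lcs br (k + 1) ≤ V) (hVk : V ≤ lcs br k) :
    ∃ j, lcs br (j + 1) < V ∧ V ≤ lcs br j := by
  classical
  have hex : ∃ i, ¬ V ≤ lcs br i := ⟨m, by rwa [hm, le_bot_iff]⟩
  obtain ⟨j, hj⟩ : ∃ j, Nat.find hex = j + 1 :=
    Nat.exists_eq_succ_of_ne_zero fun h => Nat.find_spec hex (h ▸ le_top)
  have hVj1 : ¬ V ≤ lcs br (j + 1) := hj ▸ Nat.find_spec hex
  have hVj : V ≤ lcs br j := not_not.mp (Nat.find_min hex (by omega))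
  have hkj : k ≤ j := by
    by_contra h
    exact hVj1 (hVk.trans (lcs_antitone br (by omega)))
  exact ⟨j, lt_of_le_not_ge ((lcs_antitone br (by omega)).trans hkV) hVj1, hVj⟩

end LowerCentralSeries

theorem Module.End.exists_invariant_hyperplane_ge {K M : Type*} [Field K] [IsAlgClosed K]
    [AddCommGroup M] [Module K M] [FiniteDimensional K M] (f : End K M)
    {W : Submodule K M} (hW : W ≠ ⊤) (hfW : W ∈ f.invtSubmodule) :
    ∃ H ∈ f.invtSubmodule, W ≤ H ∧ finrank K H + 1 = finrank K M := by
  have : Nontrivial W.dualAnnihilator := by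
    rw [Submodule.nontrivial_iff_ne_bot, Ne, Submodule.dualAnnihilator_eq_bot_iff]
    exact hW
  have hmaps : ∀ φ ∈ W.dualAnnihilator, f.dualMap φ ∈ W.dualAnnihilator := by
    intro φ hφ
    rw [Submodule.mem_dualAnnihilator] at hφ ⊢
    exact fun w hw => hφ _ (hfW hw)
  obtain ⟨c, hc⟩ :=
    exists_eigenvalue (K := K) (V := W.dualAnnihilator) (f.dualMap.restrict hmaps)
  obtain ⟨⟨φ, hφW⟩, hφ⟩ := hc.exists_hasEigenvector
  have hφf : ∀ x, φ (f x) = c * φ x := fun x =>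
    congrArg (fun ψ : W.dualAnnihilator => (ψ : Dual K M) x) hφ.apply_eq_smul
  have hφ0 : φ ≠ 0 := fun h => hφ.2 (Subtype.ext h)
  refine ⟨LinearMap.ker φ, fun x hx => ?_, fun w hw => ?_,
    Dual.finrank_ker_add_one_of_ne_zero hφ0⟩
  · simp only [Submodule.mem_comap, LinearMap.mem_ker, hφf, LinearMap.mem_ker.mp hx, mul_zero]
  · exact (Submodule.mem_dualAnnihilator φ).mp hφW w hw

theorem Module.End.exists_invariant_hyperplane_between [IsAlgClosed K] [FiniteDimensional K L]
    (f : End K L) {W V : Submodule K L} (hWV : W < V) (hfW : W ∈ f.invtSubmodule)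
    (hfV : V ∈ f.invtSubmodule) :
    ∃ U ∈ f.invtSubmodule, W ≤ U ∧ U ≤ V ∧ finrank K U + 1 = finrank K V := by
  have hW : W.comap V.subtype ≠ ⊤ := by
    rw [Ne, Submodule.comap_subtype_eq_top]
    exact hWV.not_ge
  obtain ⟨H, hH, hWH, hrank⟩ :=
    exists_invariant_hyperplane_ge (f.restrict hfV) hW (fun x hx => hfW hx)
  refine ⟨H.map V.subtype, ?_, fun w hw => ⟨⟨w, hWV.le hw⟩, hWH hw, rfl⟩,
    Submodule.map_subtype_le V H, by rwa [Submodule.finrank_map_subtype_eq]⟩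
  rintro _ ⟨x, hx, rfl⟩
  exact ⟨f.restrict hfV x, hH hx, rfl⟩

theorem Submodule.exists_chain_to_bot {M : Type*} [AddCommGroup M] [Module K M]
    [FiniteDimensional K M] {P : Submodule K M → Prop}
    {R : Submodule K M → Submodule K M → Prop}
    (step : ∀ V, P V → V ≠ ⊥ → ∃ U, P U ∧ R V U ∧ finrank K V = finrank K U + 1)
    {V : Submodule K M} (hV : P V) :
    ∃ J : ℕ → Submodule K M, J 0 = V ∧ J (finrank K V) = ⊥ ∧ (∀ i, P (J i)) ∧
      ∀ i < finrank K V, R (J i) (J (i + 1)) ∧ finrank K (J i) = finrank K (J (i + 1)) + 1 := by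
  induction hn : finrank K V generalizing V with
  | zero => exact ⟨fun _ => V, rfl, Submodule.finrank_eq_zero.mp hn, fun _ => hV, by simp⟩
  | succ n ih =>
    have hV0 : V ≠ ⊥ := by rintro rfl; simp at hn
    obtain ⟨U, hU, hVU, hrank⟩ := step V hV hV0
    obtain ⟨J, hJ0, hJn, hJP, hJstep⟩ := ih hU (by omega)
    refine ⟨fun | 0 => V | i + 1 => J i, rfl, hJn, fun | 0 => hV | i + 1 => hJP i, ?_⟩
    rintro (_ | i) hi
    · show R V (J 0) ∧ finrank K V = finrank K (J 0) + 1
      rw [hJ0]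
      exact ⟨hVU, hrank⟩
    · exact hJstep i (by omega)

def IsBetweenLcs (br : L →ₗ[K] L →ₗ[K] L) (V : Submodule K L) : Prop :=
  ∃ k, lcs br (k + 1) ≤ V ∧ V ≤ lcs br k

section Nilpotent

variable [IsAlgClosed K] [FiniteDimensional K L] {br : L →ₗ[K] L →ₗ[K] L} {α : L →ₗ[K] L}
  (hanti : ∀ x y : L, br y x = - br x y) (hmult : ∀ x y : L, α (br x y) = br (α x) (α y))
include hanti hmult

theorem exists_invariant_hyperplane_step {m : ℕ} (hm : lcs br m = ⊥) {V : Submodule K L}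
    (hαV : V ∈ invtSubmodule α) (hV : IsBetweenLcs br V) (hV0 : V ≠ ⊥) :
    ∃ U, (U ∈ invtSubmodule α ∧ IsBetweenLcs br U) ∧
      (U ≤ V ∧ ∀ x, ∀ y ∈ V, br x y ∈ U) ∧ finrank K V = finrank K U + 1 := by
  obtain ⟨k, hkV, hVk⟩ := hV
  obtain ⟨j, hjV, hVj⟩ := exists_lcs_succ_lt_of_le hm hV0 hkV hVk
  obtain ⟨U, hαU, hjU, hUV, hrank⟩ :=
    exists_invariant_hyperplane_between α hjV (lcs_mem_invtSubmodule hmult _) hαV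
  exact ⟨U, ⟨hαU, j, hjU, hUV.trans hVj⟩,
    ⟨hUV, fun x y hy => br_mem_of_lcs_succ_le hanti hjU x (hVj hy)⟩, hrank.symm⟩

theorem exists_central_chain_of_lcs_eq_bot {m : ℕ} (hm : lcs br m = ⊥) :
    ∃ J : ℕ → Submodule K L, J 0 = ⊤ ∧ J (finrank K L) = ⊥ ∧
      (∀ i, J i ∈ invtSubmodule α ∧ ∀ x, ∀ y ∈ J i, br x y ∈ J i) ∧
      ∀ i < finrank K L, (J (i + 1) ≤ J i ∧ ∀ x, ∀ y ∈ J i, br x y ∈ J (i + 1)) ∧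
        finrank K (J i) = finrank K (J (i + 1)) + 1 := by
  have htop : ⊤ ∈ invtSubmodule α ∧ IsBetweenLcs br ⊤ :=
    ⟨invtSubmodule.top_mem α, 0, le_top, le_rfl⟩
  obtain ⟨J, hJ0, hJN, hJP, hJstep⟩ := Submodule.exists_chain_to_bot
    (fun V hV hV0 => exists_invariant_hyperplane_step hanti hmult hm hV.1 hV.2 hV0) htop
  rw [finrank_top] at hJN hJstep
  refine ⟨J, hJ0, hJN, fun i => ⟨(hJP i).1, ?_⟩, hJstep⟩
  obtain ⟨k, hkJ, hJk⟩ := (hJP i).2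
  exact fun x y hy => br_mem_of_lcs_succ_le hanti hkJ x (hJk hy)

end Nilpotent

theorem lcs_le_of_central_chain {br : L →ₗ[K] L →ₗ[K] L} (hanti : ∀ x y : L, br y x = - br x y)
    {n : ℕ} {I : ℕ → Submodule K L} (hI1 : I 1 = ⊤)
    (hI : ∀ i, 1 ≤ i → i < n → ∀ x : L, ∀ y ∈ I i, br x y ∈ I (i + 1)) :
    ∀ j, j < n → lcs br j ≤ I (j + 1)
  | 0, _ => hI1 ▸ le_top
  | j + 1, hj => (lcs_succ_le_iff br).mpr fun x hx y => by
    rw [hanti]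
    exact neg_mem <|
      hI (j + 1) (by omega) hj y x (lcs_le_of_central_chain hanti hI1 hI j (by omega) hx)

theorem stmt17_general [IsAlgClosed K] [FiniteDimensional K L]
    (br : L →ₗ[K] L →ₗ[K] L) (α : L →ₗ[K] L)
    (hanti : ∀ x y : L, br y x = - br x y)
    (hmult : ∀ x y : L, α (br x y) = br (α x) (α y)) :
    (∃ m : ℕ, lcs br m = ⊥) ↔
    (∃ (n : ℕ) (I : ℕ → Submodule K L), 1 ≤ n ∧ I 1 = ⊤ ∧ I n = ⊥ ∧
      (∀ i, 1 ≤ i → i < n → I (i + 1) ≤ I i) ∧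
      -- each Iᵢ is an ideal of L (bracket-stable and α-invariant)
      (∀ i, 1 ≤ i → i ≤ n → ∀ x : L, ∀ y ∈ I i, br x y ∈ I i ∧ α y ∈ I i) ∧
      -- codimension-one steps with [L, Iᵢ] ⊆ Iᵢ₊₁
      (∀ i, 1 ≤ i → i < n →
        Module.finrank K (I i) = Module.finrank K (I (i + 1)) + 1 ∧
        ∀ x : L, ∀ y ∈ I i, br x y ∈ I (i + 1))) := by
  constructor
  · rintro ⟨m, hm⟩
    obtain ⟨J, hJ0, hJN, hJideal, hJstep⟩ := exists_central_chain_of_lcs_eq_bot hanti hmult hm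
    refine ⟨finrank K L + 1, fun i => J (i - 1), by omega, hJ0, by simpa using hJN, ?_,
      fun i _ _ x y hy => ⟨(hJideal _).2 x y hy, (hJideal _).1 hy⟩, ?_⟩
    · intro i hi _
      obtain ⟨j, rfl⟩ := Nat.exists_eq_add_of_le' hi
      simpa using (hJstep j (by omega)).1.1
    · intro i hi _
      obtain ⟨j, rfl⟩ := Nat.exists_eq_add_of_le' hi
      have hj := hJstep j (by omega)
      simpa using ⟨hj.2, hj.1.2⟩
  · rintro ⟨n, I, hn, hI1, hIn, -, -, hstep⟩
    refine ⟨n - 1, le_bot_iff.mp ?_⟩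
    have := lcs_le_of_central_chain hanti hI1 (fun i hi hin => (hstep i hi hin).2) (n - 1)
      (by omega)
    rwa [Nat.sub_add_cancel hn, hIn] at this

/-- A finite-dimensional multiplicative Hom-Lie algebra over an algebraically
closed field is nilpotent iff it is strongly nilpotent, i.e. iff there is a chain
of ideals `0 = Iₙ ⊴ ⋯ ⊴ I₁ = L` with one-dimensional quotients `Iᵢ/Iᵢ₊₁` and
`[L, Iᵢ] ⊆ Iᵢ₊₁`. -/
theorem stmt17 [IsAlgClosed K] [FiniteDimensional K L]
    (br : L →ₗ[K] L →ₗ[K] L) (α : L →ₗ[K] L)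
    (hanti : ∀ x y : L, br y x = - br x y)
    (hjac : ∀ x y z : L,
      br (br x y) (α z) + br (br z x) (α y) + br (br y z) (α x) = 0)
    (hmult : ∀ x y : L, α (br x y) = br (α x) (α y)) :
    (∃ m : ℕ, lcs br m = ⊥) ↔
    (∃ (n : ℕ) (I : ℕ → Submodule K L), 1 ≤ n ∧ I 1 = ⊤ ∧ I n = ⊥ ∧
      (∀ i, 1 ≤ i → i < n → I (i + 1) ≤ I i) ∧
      -- each Iᵢ is an ideal of L (bracket-stable and α-invariant)
      (∀ i, 1 ≤ i → i ≤ n → ∀ x : L, ∀ y ∈ I i, br x y ∈ I i ∧ α y ∈ I i) ∧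
      -- codimension-one steps with [L, Iᵢ] ⊆ Iᵢ₊₁
      (∀ i, 1 ≤ i → i < n →
        Module.finrank K (I i) = Module.finrank K (I (i + 1)) + 1 ∧
        ∀ x : L, ∀ y ∈ I i, br x y ∈ I (i + 1))) :=
  stmt17_general br α hanti hmult
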